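/- If the pair p_1 = (u_1, v_1) is top reducible by the pair p_2 = (u_2, v_2), then q = p_1 − (lt(p_1)/lt(p_2))·p_2 is again a pair, sig(q) = sig(p_1), and either q is syzygy or lm(q) ≺_m lm(p_1). -/
import Mathlib


namespace TRB

open MvPolynomial
open scoped Classical

/-- Monomials in the variables `x₁, …, xₙ`, identified with their exponent vectors;
a monomial `m₁` divides `m₂` iff the exponent vector of `m₁` is componentwise `≤`. -/
abbrev Mon (n : ℕ) := Fin n →₀ ℕ

/-- Module monomials (signatures) `x^α E_i` of the free module `P^d`. -/
abbrev Sig (n d : ℕ) := Mon n × Fin d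

/-- The action of a monomial on a module monomial: `m • (x^α E_i) = (m x^α) E_i`. -/
noncomputable def Sig.smul {n d : ℕ} (m : Mon n) (s : Sig n d) : Sig n d := (m + s.1, s.2)

/-- An admissible monomial order on the monomials of `P = K[x₁,…,xₙ]`:
a (strict) linear order such that `1 ⪯ m` for every monomial `m`, and
multiplication by a monomial is strictly monotone. -/
structure MonOrder (n : ℕ) where
  lt : Mon n → Mon n → Prop
  irrefl : ∀ a, ¬ lt a a
  trans : ∀ a b c, lt a b → lt b c → lt a c
  total : ∀ a b, lt a b ∨ a = b ∨ lt b a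
  zero_lt : ∀ a, a ≠ 0 → lt 0 a
  mul_lt_mul : ∀ (m a b : Mon n), lt a b → lt (m + a) (m + b)

/-- An admissible signature order on module monomials:
a (strict) linear order with `s ⪯ m • s` for every monomial `m`, and such that
multiplication by a monomial is strictly monotone. -/
structure SigOrder (n d : ℕ) where
  lt : Sig n d → Sig n d → Prop
  irrefl : ∀ s, ¬ lt s s
  trans : ∀ s t r, lt s t → lt t r → lt s r
  total : ∀ s t, lt s t ∨ s = t ∨ lt t s
  le_smul : ∀ (m : Mon n) (s : Sig n d), s = Sig.smul m s ∨ lt s (Sig.smul m s)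
  smul_lt_smul : ∀ (m : Mon n) (s t : Sig n d), lt s t → lt (Sig.smul m s) (Sig.smul m t)

/-- Non-strict version of a monomial order. -/
def MonOrder.le {n : ℕ} (mo : MonOrder n) (a b : Mon n) : Prop := mo.lt a b ∨ a = b

/-- Non-strict version of a signature order. -/
def SigOrder.le {n d : ℕ} (so : SigOrder n d) (s t : Sig n d) : Prop := so.lt s t ∨ s = t

/-- The `≺_m`-leading monomial of a polynomial (junk value `0` on the zero polynomial). -/
noncomputable def MonOrder.lm {n : ℕ} {K : Type*} [CommSemiring K] (mo : MonOrder n)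
    (v : MvPolynomial (Fin n) K) : Mon n :=
  if h : ∃ m ∈ v.support, ∀ m' ∈ v.support, m' ≠ m → mo.lt m' m then h.choose else 0

/-- The signature of a module element `u ∈ P^d`: the `≺_s`-largest module monomial
`x^α E_i` whose coefficient in `u` is nonzero (junk value on `u = 0`). -/
noncomputable def SigOrder.sig {n d : ℕ} [NeZero d] {K : Type*} [CommSemiring K]
    (so : SigOrder n d) (u : Fin d → MvPolynomial (Fin n) K) : Sig n d :=
  if h : ∃ s : Sig n d, (u s.2).coeff s.1 ≠ 0 ∧
      ∀ t : Sig n d, (u t.2).coeff t.1 ≠ 0 → t ≠ s → so.lt t s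
  then h.choose else (0, ⟨0, Nat.pos_of_ne_zero (NeZero.ne d)⟩)

/-- The ambient type of candidate pairs `(u, v) ∈ P^d × P`. -/
abbrev PairT (K : Type*) [CommSemiring K] (n d : ℕ) :=
  (Fin d → MvPolynomial (Fin n) K) × MvPolynomial (Fin n) K

variable {K : Type*} [Field K] {n d : ℕ}

/-- `(u, v)` is a pair (w.r.t. the input `f`) if `u ⬝ f = Σ_i u_i f_i = v`. -/
def IsPair (f : Fin d → MvPolynomial (Fin n) K) (p : PairT K n d) : Prop :=
  ∑ i, p.1 i * f i = p.2

/-- Leading monomial of a pair: `lm p = lm v`. -/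
noncomputable def lmP (mo : MonOrder n) (p : PairT K n d) : Mon n := mo.lm p.2

/-- Signature of a pair: `sig p = sig u`. -/
noncomputable def sigP [NeZero d] (so : SigOrder n d) (p : PairT K n d) : Sig n d :=
  so.sig p.1

/-- The pair order: `p ≺_p q` iff `lm(p)·sig(q) ≺_s lm(q)·sig(p)`. -/
def PairLt [NeZero d] (mo : MonOrder n) (so : SigOrder n d) (p q : PairT K n d) : Prop :=
  so.lt (Sig.smul (lmP mo p) (sigP so q)) (Sig.smul (lmP mo q) (sigP so p))

/-- Pairs are similar if `lm(p)·sig(q) = lm(q)·sig(p)`. -/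
def Similar [NeZero d] (mo : MonOrder n) (so : SigOrder n d) (p q : PairT K n d) : Prop :=
  Sig.smul (lmP mo p) (sigP so q) = Sig.smul (lmP mo q) (sigP so p)

/-- `p ⪯_p q`. -/
def PairLE [NeZero d] (mo : MonOrder n) (so : SigOrder n d) (p q : PairT K n d) : Prop :=
  PairLt mo so p q ∨ Similar mo so p q

/-- Pairs are equivalent if they have the same signature and the same leading monomial. -/
def Equivalent [NeZero d] (mo : MonOrder n) (so : SigOrder n d) (p q : PairT K n d) : Prop :=
  sigP so p = sigP so q ∧ lmP mo p = lmP mo q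

/-- `p` is top reducible by `q`: both non-syzygy, `p ≺_p q` and `lm(q) ∣ lm(p)`. -/
def TopRed [NeZero d] (mo : MonOrder n) (so : SigOrder n d) (p q : PairT K n d) : Prop :=
  p.2 ≠ 0 ∧ q.2 ≠ 0 ∧ PairLt mo so p q ∧ lmP mo q ≤ lmP mo p

/-- A TRP pair: a non-syzygy pair that is top reducible by no pair. -/
def IsTRP [NeZero d] (f : Fin d → MvPolynomial (Fin n) K) (mo : MonOrder n)
    (so : SigOrder n d) (p : PairT K n d) : Prop :=
  IsPair f p ∧ p.2 ≠ 0 ∧ ∀ q : PairT K n d, IsPair f q → ¬ TopRed mo so p q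

/-- Divisibility of signatures: `x^α E_i ∣ x^β E_j` iff `i = j` and `x^α ∣ x^β`. -/
def SigDvd {n d : ℕ} (s t : Sig n d) : Prop := s.2 = t.2 ∧ s.1 ≤ t.1

/-- A TRB pair: a TRP pair `p` such that no TRP pair similar to `p` has signature
properly dividing `sig p`. -/
def IsTRB [NeZero d] (f : Fin d → MvPolynomial (Fin n) K) (mo : MonOrder n)
    (so : SigOrder n d) (p : PairT K n d) : Prop :=
  IsTRP f mo so p ∧ ∀ q : PairT K n d, IsTRP f mo so q → Similar mo so p q →
    SigDvd (sigP so q) (sigP so p) → sigP so q = sigP so p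

/-- A signature is syzygy if it is the signature of a syzygy pair `(u, 0)`, `u ≠ 0`. -/
def IsSyzygySig [NeZero d] (f : Fin d → MvPolynomial (Fin n) K) (so : SigOrder n d)
    (s : Sig n d) : Prop :=
  ∃ u : Fin d → MvPolynomial (Fin n) K, u ≠ 0 ∧ IsPair f (u, 0) ∧ so.sig u = s

/-- The sub-order `≺_{s,i}` on monomials: `x^α ≺_{s,i} x^β` iff `x^α E_i ≺_s x^β E_i`. -/
def SubOrder {n d : ℕ} (so : SigOrder n d) (i : Fin d) (a b : Mon n) : Prop :=
  so.lt (a, i) (b, i)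

/-- The sub-order `≺_{s,i}` coincides with `≺_m`. -/
def EqOrders {n d : ℕ} (so : SigOrder n d) (mo : MonOrder n) (i : Fin d) : Prop :=
  ∀ a b : Mon n, SubOrder so i a b ↔ mo.lt a b

/-- `≺_m` and `≺_s` are almost compatible: either every sub-order `≺_{s,i}` coincides
with `≺_m`, or there is exactly one index `k` with `≺_{s,k} ≠ ≺_m`, and this `k`
satisfies `x^α E_k ≺_s E_i` for every monomial `x^α` and every index `i ≠ k`. -/
def AlmostCompatible {n d : ℕ} (mo : MonOrder n) (so : SigOrder n d) : Prop :=
  (∀ i, EqOrders so mo i) ∨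
  (∃ k, ¬ EqOrders so mo k ∧ (∀ i, i ≠ k → EqOrders so mo i) ∧
    ∀ (a : Mon n) (i : Fin d), i ≠ k → so.lt (a, k) ((0 : Mon n), i))

/-- `≺_m` and `≺_s` are compatible: `s₁ ⪯_s s₂` and `m₁ ⪯_m m₂` imply
`m₁·s₁ ⪯_s m₂·s₂`, with equality only when `s₁ = s₂` and `m₁ = m₂`. -/
def Compatible {n d : ℕ} (mo : MonOrder n) (so : SigOrder n d) : Prop :=
  ∀ (s₁ s₂ : Sig n d) (m₁ m₂ : Mon n), so.le s₁ s₂ → mo.le m₁ m₂ →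
    so.le (Sig.smul m₁ s₁) (Sig.smul m₂ s₂) ∧
    (Sig.smul m₁ s₁ = Sig.smul m₂ s₂ → s₁ = s₂ ∧ m₁ = m₂)

/-- The multiplied pair `m·p = (X^m · u, X^m · v)`. -/
noncomputable def mulPair (m : Mon n) (p : PairT K n d) : PairT K n d :=
  (fun i => monomial m (1 : K) * p.1 i, monomial m (1 : K) * p.2)

/-- `[m, p]` is the J-pair of the non-similar non-syzygy pairs `p₁, p₂`:
`p` is the `≺_p`-smaller of the two and `m·lm(p) = lcm(lm p₁, lm p₂)`. -/
def IsJPair [NeZero d] (mo : MonOrder n) (so : SigOrder n d) (p₁ p₂ : PairT K n d)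
    (m : Mon n) (p : PairT K n d) : Prop :=
  p₁.2 ≠ 0 ∧ p₂.2 ≠ 0 ∧ ¬ Similar mo so p₁ p₂ ∧
  ((PairLt mo so p₁ p₂ ∧ p = p₁) ∨ (PairLt mo so p₂ p₁ ∧ p = p₂)) ∧
  m + lmP mo p = lmP mo p₁ ⊔ lmP mo p₂

/-- `G` is a Gröbner basis of the ideal `⟨f₁,…,f_d⟩` w.r.t. `≺_m`: `G` consists of
elements of the ideal, and for every nonzero `v` in the ideal there is a nonzero
`g ∈ G` with `lm g ∣ lm v`. -/
def IsGroebnerBasis (mo : MonOrder n) (f : Fin d → MvPolynomial (Fin n) K)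
    (G : Set (MvPolynomial (Fin n) K)) : Prop :=
  (∀ g ∈ G, g ∈ Ideal.span (Set.range f)) ∧
  ∀ v ∈ Ideal.span (Set.range f), v ≠ 0 →
    ∃ g ∈ G, g ≠ 0 ∧ mo.lm g ≤ mo.lm v



private lemma exists_max' {α : Type*} (lt : α → α → Prop)
    (htrans : ∀ a b c, lt a b → lt b c → lt a c)
    (htotal : ∀ a b, lt a b ∨ a = b ∨ lt b a)
    (S : Finset α) : S.Nonempty → ∃ s ∈ S, ∀ t ∈ S, t ≠ s → lt t s := by
  classical
  induction S using Finset.induction_on with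
  | empty => rintro ⟨x, hx⟩; simp at hx
  | @insert a S' ha ih =>
    intro _
    rcases S'.eq_empty_or_nonempty with rfl | hS'
    · exact ⟨a, Finset.mem_insert_self _ _, by
        intro t ht hta
        rcases Finset.mem_insert.1 ht with rfl | ht
        · exact absurd rfl hta
        · simp at ht⟩
    · obtain ⟨s, hsS, hmax⟩ := ih hS'
      rcases htotal a s with h | rfl | h
      · refine ⟨s, Finset.mem_insert_of_mem hsS, ?_⟩
        intro t ht hts
        rcases Finset.mem_insert.1 ht with rfl | ht
        · exact h
        · exact hmax t ht hts
      · refine ⟨a, Finset.mem_insert_self _ _, ?_⟩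
        intro t ht hta
        rcases Finset.mem_insert.1 ht with rfl | ht
        · exact absurd rfl hta
        · exact hmax t ht hta
      · refine ⟨a, Finset.mem_insert_self _ _, ?_⟩
        intro t ht hta
        rcases Finset.mem_insert.1 ht with rfl | ht
        · exact absurd rfl hta
        · by_cases hts : t = s
          · exact hts ▸ h
          · exact htrans _ _ _ (hmax t ht hts) h

private lemma sig_eq {n d : ℕ} [NeZero d] {K : Type*} [CommSemiring K] (so : SigOrder n d)
    (u : Fin d → MvPolynomial (Fin n) K) (s : Sig n d)
    (hs : (u s.2).coeff s.1 ≠ 0)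
    (hmax : ∀ t : Sig n d, (u t.2).coeff t.1 ≠ 0 → t ≠ s → so.lt t s) :
    so.sig u = s := by
  have hex : ∃ s : Sig n d, (u s.2).coeff s.1 ≠ 0 ∧
      ∀ t : Sig n d, (u t.2).coeff t.1 ≠ 0 → t ≠ s → so.lt t s := ⟨s, hs, hmax⟩
  rw [SigOrder.sig, dif_pos hex]
  obtain ⟨h1, h2⟩ := hex.choose_spec
  by_contra hne
  exact so.irrefl _ (so.trans _ _ _ (h2 s hs (fun h => hne h.symm)) (hmax _ h1 hne))

private lemma sig_spec {n d : ℕ} [NeZero d] {K : Type*} [CommSemiring K] (so : SigOrder n d)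
    (u : Fin d → MvPolynomial (Fin n) K) (hu : u ≠ 0) :
    (u (so.sig u).2).coeff (so.sig u).1 ≠ 0 ∧
      ∀ t : Sig n d, (u t.2).coeff t.1 ≠ 0 → t ≠ so.sig u → so.lt t (so.sig u) := by
  classical
  set S : Finset (Sig n d) :=
    Finset.univ.biUnion (fun i => (u i).support.image (fun a => ((a, i) : Sig n d))) with hS
  have hmem : ∀ t : Sig n d, t ∈ S ↔ (u t.2).coeff t.1 ≠ 0 := by
    intro t
    simp only [hS, Finset.mem_biUnion, Finset.mem_univ, true_and, Finset.mem_image,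
      MvPolynomial.mem_support_iff]
    constructor
    · rintro ⟨i, a, ha, rfl⟩; exact ha
    · intro h; exact ⟨t.2, t.1, h, rfl⟩
  have hne : S.Nonempty := by
    obtain ⟨i, hi⟩ : ∃ i, u i ≠ 0 := by
      by_contra h; push_neg at h; exact hu (funext h)
    obtain ⟨a, ha⟩ := MvPolynomial.ne_zero_iff.1 hi
    exact ⟨(a, i), (hmem (a, i)).2 ha⟩
  obtain ⟨s, hsS, hmax⟩ := exists_max' so.lt so.trans so.total S hne
  have heq : so.sig u = s :=
    sig_eq so u s ((hmem s).1 hsS) (fun t ht => hmax t ((hmem t).2 ht))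
  rw [heq]
  exact ⟨(hmem s).1 hsS, fun t ht => hmax t ((hmem t).2 ht)⟩

private lemma lm_spec {n : ℕ} {K : Type*} [CommSemiring K] (mo : MonOrder n)
    (v : MvPolynomial (Fin n) K) (hv : v ≠ 0) :
    mo.lm v ∈ v.support ∧ ∀ t ∈ v.support, t ≠ mo.lm v → mo.lt t (mo.lm v) := by
  have hex : ∃ m ∈ v.support, ∀ m' ∈ v.support, m' ≠ m → mo.lt m' m :=
    exists_max' mo.lt mo.trans mo.total v.support (MvPolynomial.support_nonempty.2 hv)
  rw [MonOrder.lm, dif_pos hex]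
  exact hex.choose_spec

/-- If the pair `p₁ = (u₁, v₁)` is top reducible by the pair
`p₂ = (u₂, v₂)`, then `q = p₁ − (lt p₁ / lt p₂)·p₂` is again a pair, `sig q = sig p₁`,
and either `q` is syzygy or `lm q ≺_m lm p₁`. -/
theorem topReduction_step {K : Type*} [Field K] {n d : ℕ} [NeZero d]
    (mo : MonOrder n) (so : SigOrder n d) (f : Fin d → MvPolynomial (Fin n) K)
    (p₁ p₂ : PairT K n d) (h1 : IsPair f p₁) (h2 : IsPair f p₂)
    (hred : TopRed mo so p₁ p₂) (q : PairT K n d)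
    (hq : q = (fun i => p₁.1 i -
          monomial (lmP mo p₁ - lmP mo p₂)
            (p₁.2.coeff (lmP mo p₁) / p₂.2.coeff (lmP mo p₂)) * p₂.1 i,
        p₁.2 - monomial (lmP mo p₁ - lmP mo p₂)
            (p₁.2.coeff (lmP mo p₁) / p₂.2.coeff (lmP mo p₂)) * p₂.2)) :
    IsPair f q ∧ sigP so q = sigP so p₁ ∧
      (q.2 = 0 ∨ mo.lt (mo.lm q.2) (lmP mo p₁)) := by
  classical
  obtain ⟨hv1, hv2, hplt, hdvd⟩ := hred
  set m : Mon n := lmP mo p₁ - lmP mo p₂ with hm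
  set c : K := p₁.2.coeff (lmP mo p₁) / p₂.2.coeff (lmP mo p₂) with hc
  have hmadd : m + lmP mo p₂ = lmP mo p₁ := tsub_add_cancel_of_le hdvd
  obtain ⟨hm1mem, hm1max⟩ := lm_spec mo p₁.2 hv1
  obtain ⟨hm2mem, hm2max⟩ := lm_spec mo p₂.2 hv2
  have hc1 : p₁.2.coeff (lmP mo p₁) ≠ 0 := MvPolynomial.mem_support_iff.1 hm1mem
  have hc2 : p₂.2.coeff (lmP mo p₂) ≠ 0 := MvPolynomial.mem_support_iff.1 hm2mem
  -- Part 1: q is a pair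
  have hpair : IsPair f q := by
    rw [hq]
    show ∑ i, (p₁.1 i - monomial m c * p₂.1 i) * f i = p₁.2 - monomial m c * p₂.2
    calc ∑ i, (p₁.1 i - monomial m c * p₂.1 i) * f i
        = (∑ i, p₁.1 i * f i) - monomial m c * ∑ i, p₂.1 i * f i := by
          rw [Finset.mul_sum, ← Finset.sum_sub_distrib]
          refine Finset.sum_congr rfl fun i _ => ?_
          ring
      _ = p₁.2 - monomial m c * p₂.2 := by rw [h1, h2]
  -- Part 3: leading monomial drops
  have hq2lm : q.2.coeff (lmP mo p₁) = 0 := by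
    rw [hq]
    show p₁.2.coeff (lmP mo p₁) - (monomial m c * p₂.2).coeff (lmP mo p₁) = 0
    rw [← hmadd, MvPolynomial.coeff_monomial_mul, hc]
    rw [div_mul_cancel₀ _ hc2, hmadd, sub_self]
  have hsupp : ∀ t ∈ q.2.support, mo.lt t (lmP mo p₁) := by
    intro t ht
    have htne : t ≠ lmP mo p₁ := by
      rintro rfl; exact MvPolynomial.mem_support_iff.1 ht hq2lm
    have hor : p₁.2.coeff t ≠ 0 ∨ (monomial m c * p₂.2).coeff t ≠ 0 := by
      by_contra h
      push_neg at h
      apply MvPolynomial.mem_support_iff.1 ht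
      rw [hq]
      show p₁.2.coeff t - (monomial m c * p₂.2).coeff t = 0
      rw [h.1, h.2, sub_zero]
    rcases hor with h | h
    · exact hm1max t (MvPolynomial.mem_support_iff.2 h) htne
    · rw [MvPolynomial.coeff_monomial_mul'] at h
      by_cases hle : m ≤ t
      · rw [if_pos hle] at h
        have hγ : p₂.2.coeff (t - m) ≠ 0 := fun h0 => h (by rw [h0, mul_zero])
        have hts : t = m + (t - m) := (add_tsub_cancel_of_le hle).symm
        rcases eq_or_ne (t - m) (lmP mo p₂) with he | hne2
        · exact absurd (by rw [hts, he, hmadd]) htne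
        · have := mo.mul_lt_mul m _ _
            (hm2max (t - m) (MvPolynomial.mem_support_iff.2 hγ) hne2)
          have hmadd' : m + mo.lm p₂.2 = lmP mo p₁ := hmadd
          rw [← hts, hmadd'] at this
          exact this
      · rw [if_neg hle] at h
        exact absurd rfl h
  -- Part 2: signatures
  have hu1 : p₁.1 ≠ 0 := by
    rintro h0
    apply hv1
    rw [← h1, h0]
    simp
  have hu2 : p₂.1 ≠ 0 := by
    rintro h0
    apply hv2
    rw [← h2, h0]
    simp
  obtain ⟨hs1c, hs1max⟩ := sig_spec so p₁.1 hu1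
  obtain ⟨hs2c, hs2max⟩ := sig_spec so p₂.1 hu2
  have hkey : so.lt (Sig.smul m (sigP so p₂)) (sigP so p₁) := by
    have heq : Sig.smul (lmP mo p₂) (Sig.smul m (sigP so p₂))
        = Sig.smul (lmP mo p₁) (sigP so p₂) := by
      simp only [Sig.smul, ← hmadd]
      exact Prod.ext (by abel_nf) rfl
    have h' : so.lt (Sig.smul (lmP mo p₂) (Sig.smul m (sigP so p₂)))
        (Sig.smul (lmP mo p₂) (sigP so p₁)) := by
      rw [heq]; exact hplt
    rcases so.total (Sig.smul m (sigP so p₂)) (sigP so p₁) with h | h | h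
    · exact h
    · rw [h] at h'; exact absurd h' (so.irrefl _)
    · exact absurd (so.trans _ _ _ h' (so.smul_lt_smul _ _ _ h)) (so.irrefl _)
  have hw : ∀ t : Sig n d, (monomial m c * p₂.1 t.2).coeff t.1 ≠ 0 →
      so.lt t (sigP so p₁) := by
    intro t ht
    rw [MvPolynomial.coeff_monomial_mul'] at ht
    by_cases hle : m ≤ t.1
    · rw [if_pos hle] at ht
      have hγ : (p₂.1 t.2).coeff (t.1 - m) ≠ 0 := fun h0 => ht (by rw [h0, mul_zero])
      have hts : t = Sig.smul m (t.1 - m, t.2) :=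
        Prod.ext (add_tsub_cancel_of_le hle).symm rfl
      rcases eq_or_ne ((t.1 - m, t.2) : Sig n d) (sigP so p₂) with he | hne2
      · rw [hts, he]; exact hkey
      · have h2 : so.lt ((t.1 - m, t.2) : Sig n d) (sigP so p₂) := hs2max _ hγ hne2
        rw [hts]
        exact so.trans _ _ _ (so.smul_lt_smul m _ _ h2) hkey
    · rw [if_neg hle] at ht
      exact absurd rfl ht
  have hwz : (monomial m c * p₂.1 (sigP so p₁).2).coeff (sigP so p₁).1 = 0 := by
    by_contra h
    exact so.irrefl _ (hw _ h)
  have hsig : sigP so q = sigP so p₁ := by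
    show so.sig q.1 = sigP so p₁
    apply sig_eq
    · rw [hq]
      show (p₁.1 (sigP so p₁).2 - monomial m c * p₂.1 (sigP so p₁).2).coeff
        (sigP so p₁).1 ≠ 0
      rw [MvPolynomial.coeff_sub, hwz, sub_zero]
      exact hs1c
    · intro t ht htne
      rw [hq] at ht
      replace ht : (p₁.1 t.2 - monomial m c * p₂.1 t.2).coeff t.1 ≠ 0 := ht
      rw [MvPolynomial.coeff_sub] at ht
      have hor : (p₁.1 t.2).coeff t.1 ≠ 0 ∨ (monomial m c * p₂.1 t.2).coeff t.1 ≠ 0 := by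
        by_contra h
        push_neg at h
        rw [h.1, h.2, sub_zero] at ht
        exact ht rfl
      rcases hor with h | h
      · exact hs1max t h htne
      · exact hw t h
  refine ⟨hpair, hsig, ?_⟩
  rcases eq_or_ne q.2 0 with h | h
  · exact Or.inl h
  · exact Or.inr (hsupp _ (lm_spec mo q.2 h).1)


end TRB
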